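/- There exists C > 0 such that for every ε ∈ (0,1) and every integer n with 0 ≤ n ≤ N_ε − 1 (N_ε = ⌊log₂(1/ε)⌋): | ∫_{(2π)2^{-(n+1)} < |x| ≤ (2π)2^{-n}} G_ε(x)² dx − (1/(8π²)) log 2 | ≤ C (2^{-n} + 2^{-(N_ε − n − 1)}), where the integral is over x ∈ 𝕋⁴ and G_ε is the mollified Green's function of (1 − Δ) on 𝕋⁴. -/

import Mathlib

open MeasureTheory Real

noncomputable section

/-- The Euclidean norm on `Fin 4 → ℝ` (we work with periodic functions on `ℝ⁴`
representing functions on the torus `𝕋⁴ = (ℝ/2πℤ)⁴`). -/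
def enorm4 (x : Fin 4 → ℝ) : ℝ := Real.sqrt (∑ i, (x i) ^ 2)

/-- A point of the lattice `(2πℤ)⁴`. -/
def lpt (k : Fin 4 → ℤ) : Fin 4 → ℝ := fun i => 2 * Real.pi * (k i)

/-- Geodesic distance of (the torus point represented by) `x` to `0`,
i.e. the Euclidean distance of `x` to the lattice `(2πℤ)⁴`. -/
def latDist (x : Fin 4 → ℝ) : ℝ := ⨅ k : Fin 4 → ℤ, enorm4 (x - lpt k)

/-- The set of points representing `𝕋⁴ \ {0}`. -/
def Sreg : Set (Fin 4 → ℝ) := {x | ∀ k : Fin 4 → ℤ, x ≠ lpt k}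

/-- A fundamental domain `(-π, π]⁴` for the torus. -/
def FD : Set (Fin 4 → ℝ) := {x | ∀ i, x i ∈ Set.Ioc (-Real.pi) Real.pi}

/-- `(2πℤ)⁴`-periodicity, i.e. `f` represents a function on `𝕋⁴`. -/
def Per (f : (Fin 4 → ℝ) → ℝ) : Prop :=
  ∀ (x : Fin 4 → ℝ) (k : Fin 4 → ℤ), f (x + lpt k) = f x

/-- The Laplacian of `φ`. -/
def lap (φ : (Fin 4 → ℝ) → ℝ) (x : Fin 4 → ℝ) : ℝ :=
  ∑ i, fderiv ℝ (fun y => fderiv ℝ φ y (Pi.single i 1)) x (Pi.single i 1)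


/-- The rescaled mollifier `ρ_ε(x) = ε^{-4} ρ(x/ε)`. -/
def moll (ρ : (Fin 4 → ℝ) → ℝ) (ε : ℝ) (x : Fin 4 → ℝ) : ℝ :=
  ε⁻¹ ^ 4 * ρ (fun i => x i / ε)

/-- The mollified Green's function `G_ε = ρ_ε ⋆ G`. -/
def Geps (g ρ : (Fin 4 → ℝ) → ℝ) (ε : ℝ) (x : Fin 4 → ℝ) : ℝ :=
  ∫ y : Fin 4 → ℝ, moll ρ ε y * g (x - y)

set_option maxHeartbeats 1000000



variable {ρ g : (Fin 4 → ℝ) → ℝ} {ε : ℝ}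

-- enorm4 basics
lemma enorm4_eq_norm (x : Fin 4 → ℝ) :
    enorm4 x = ‖(WithLp.equiv 2 (Fin 4 → ℝ)).symm x‖ := by
  rw [EuclideanSpace.norm_eq]
  unfold enorm4
  congr 1
  refine Finset.sum_congr rfl fun i _ => ?_
  rw [WithLp.equiv_symm_apply, PiLp.toLp_apply, Real.norm_eq_abs, sq_abs]

lemma enorm4_nonneg (x : Fin 4 → ℝ) : 0 ≤ enorm4 x := Real.sqrt_nonneg _

lemma enorm4_neg (x : Fin 4 → ℝ) : enorm4 (-x) = enorm4 x := by
  unfold enorm4; congr 1; refine Finset.sum_congr rfl fun i _ => ?_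
  simp [neg_sq]

lemma enorm4_triangle (x y : Fin 4 → ℝ) : enorm4 (x + y) ≤ enorm4 x + enorm4 y := by
  rw [enorm4_eq_norm, enorm4_eq_norm, enorm4_eq_norm]
  exact norm_add_le _ _

lemma abs_apply_le_enorm4 (x : Fin 4 → ℝ) (i : Fin 4) : |x i| ≤ enorm4 x := by
  have h1 : (x i)^2 ≤ ∑ j, (x j)^2 :=
    Finset.single_le_sum (f := fun j => (x j)^2) (fun j _ => sq_nonneg _) (Finset.mem_univ i)
  calc |x i| = Real.sqrt ((x i)^2) := (Real.sqrt_sq_eq_abs _).symm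
  _ ≤ enorm4 x := Real.sqrt_le_sqrt h1

lemma enorm4_le_of_bounded {x : Fin 4 → ℝ} {ε : ℝ} (h : ∀ i, |x i| ≤ ε) :
    enorm4 x ≤ 2 * ε := by
  have hε : 0 ≤ ε := le_trans (abs_nonneg _) (h 0)
  have h1 : ∑ i, (x i)^2 ≤ (2*ε)^2 := by
    have : ∀ i : Fin 4, (x i)^2 ≤ ε^2 := fun i => by
      rw [← sq_abs]; exact pow_le_pow_left₀ (abs_nonneg _) (h i) 2
    calc ∑ i, (x i)^2 ≤ ∑ _i : Fin 4, ε^2 := Finset.sum_le_sum fun i _ => this i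
    _ = (2*ε)^2 := by rw [Finset.sum_const]; simp; ring
  calc enorm4 x ≤ Real.sqrt ((2*ε)^2) := Real.sqrt_le_sqrt h1
  _ = 2*ε := Real.sqrt_sq (by linarith)

-- latDist basics
lemma latDist_bddBelow (x : Fin 4 → ℝ) :
    BddBelow (Set.range fun k : Fin 4 → ℤ => enorm4 (x - lpt k)) :=
  ⟨0, fun _ ⟨k, hk⟩ => hk ▸ enorm4_nonneg _⟩

lemma latDist_le (x : Fin 4 → ℝ) (k : Fin 4 → ℤ) : latDist x ≤ enorm4 (x - lpt k) :=
  ciInf_le (latDist_bddBelow x) k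

lemma latDist_nonneg (x : Fin 4 → ℝ) : 0 ≤ latDist x :=
  le_ciInf fun k => enorm4_nonneg _

lemma lpt_zero : lpt 0 = 0 := by funext i; simp [lpt]

lemma latDist_le_enorm4 (x : Fin 4 → ℝ) : latDist x ≤ enorm4 x := by
  have := latDist_le x 0
  rwa [lpt_zero, sub_zero] at this

lemma latDist_lip (x y : Fin 4 → ℝ) : latDist x ≤ latDist y + enorm4 (x - y) := by
  have h : ∀ k : Fin 4 → ℤ, latDist x - enorm4 (x - y) ≤ enorm4 (y - lpt k) := by
    intro k
    have h1 := latDist_le x k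
    have h2 : enorm4 (x - lpt k) ≤ enorm4 (x - y) + enorm4 (y - lpt k) := by
      have := enorm4_triangle (x - y) (y - lpt k)
      rwa [sub_add_sub_cancel] at this
    linarith
  have h2 : latDist x - enorm4 (x - y) ≤ latDist y := le_ciInf h
  linarith

lemma latDist_abs_sub (x y : Fin 4 → ℝ) : |latDist x - latDist y| ≤ enorm4 (x - y) := by
  rw [abs_sub_le_iff]
  constructor
  · linarith [latDist_lip x y]
  · have := latDist_lip y x
    have h : enorm4 (y - x) = enorm4 (x - y) := by
      rw [show y - x = -(x-y) by ring, enorm4_neg]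
    linarith [h ▸ this]

lemma latDist_eq_enorm4_of_FD {x : Fin 4 → ℝ} (hx : x ∈ FD) : latDist x = enorm4 x := by
  refine le_antisymm (latDist_le_enorm4 x) (le_ciInf fun k => ?_)
  have hsum : ∑ i, (x i)^2 ≤ ∑ i, ((x - lpt k) i)^2 := by
    refine Finset.sum_le_sum fun i _ => ?_
    have hxi := hx i
    simp only [Set.mem_Ioc] at hxi
    have hpi := Real.pi_pos
    simp only [Pi.sub_apply, lpt]
    rcases lt_trichotomy (k i) 0 with hk | hk | hk
    · have hc : (k i : ℝ) ≤ -1 := by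
        have : k i ≤ -1 := by omega
        exact_mod_cast this
      nlinarith [mul_nonneg (show (0:ℝ) ≤ -(4*π*(k i:ℝ)) by nlinarith)
        (show (0:ℝ) ≤ -(π*(k i:ℝ) - x i) by nlinarith)]
    · simp [hk]
    · have hc : (1:ℝ) ≤ (k i : ℝ) := by exact_mod_cast hk
      nlinarith [mul_nonneg (show (0:ℝ) ≤ 4*π*(k i:ℝ) by nlinarith)
        (show (0:ℝ) ≤ π*(k i:ℝ) - x i by nlinarith)]
  exact Real.sqrt_le_sqrt hsum

lemma latDist_continuous : Continuous latDist := by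
  have : LipschitzWith 2 latDist := by
    refine LipschitzWith.of_dist_le_mul fun x y => ?_
    rw [Real.dist_eq]
    refine (latDist_abs_sub x y).trans ?_
    have h1 : ∀ i, |(x - y) i| ≤ dist x y := fun i => by
      have := dist_le_pi_dist x y i
      rwa [Real.dist_eq] at this
    have := enorm4_le_of_bounded (x := x - y) (ε := dist x y) h1
    refine this.trans ?_
    norm_num
  exact this.continuous





lemma moll_eq_smul (hε : 0 < ε) : moll ρ ε = fun x => ε⁻¹ ^ 4 * ρ (ε⁻¹ • x) := by
  funext x
  unfold moll
  congr 1
  congr 1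
  funext i
  simp [Pi.smul_apply, smul_eq_mul, div_eq_inv_mul]

lemma moll_continuous (hρ : Continuous ρ) (hε : 0 < ε) : Continuous (moll ρ ε) := by
  rw [moll_eq_smul hε]
  exact continuous_const.mul (hρ.comp (continuous_const_smul ε⁻¹))

lemma moll_nonneg (hρ : ∀ x, 0 ≤ ρ x) (x : Fin 4 → ℝ) : 0 ≤ moll ρ ε x :=
  mul_nonneg (by positivity) (hρ _)

lemma moll_hcs (hρsupp : ∀ x, ρ x ≠ 0 → ∀ i, |x i| < 1) (hε : 0 < ε) :
    HasCompactSupport (moll ρ ε) := by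
  apply HasCompactSupport.intro (isCompact_Icc (a := fun _ : Fin 4 => -ε) (b := fun _ => ε))
  intro x hx
  simp only [Set.mem_Icc, Pi.le_def, not_and_or, not_forall] at hx
  have hbad : ∃ i, ¬ |x i| ≤ ε := by
    rcases hx with ⟨i, hi⟩ | ⟨i, hi⟩
    · exact ⟨i, fun h => hi (by rw [abs_le] at h; exact h.1)⟩
    · exact ⟨i, fun h => hi (by rw [abs_le] at h; exact h.2)⟩
  obtain ⟨i, hi⟩ := hbad
  unfold moll
  rcases eq_or_ne (ρ fun j => x j / ε) 0 with h | h
  · simp [h]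
  · exfalso
    have := hρsupp _ h i
    rw [abs_div, abs_of_pos hε, div_lt_one hε] at this
    exact hi this.le

lemma moll_integral (hρsmooth : Continuous ρ)
    (hρsupp : ∀ x, ρ x ≠ 0 → ∀ i, |x i| < 1)
    (hρint : ∫ x : Fin 4 → ℝ, ρ x = 1) (hε : 0 < ε) :
    ∫ x : Fin 4 → ℝ, moll ρ ε x = 1 := by
  rw [moll_eq_smul hε]
  rw [integral_const_mul]
  rw [MeasureTheory.Measure.integral_comp_smul_of_nonneg volume ρ ε⁻¹ (hR := by positivity)]
  rw [hρint, smul_eq_mul, mul_one]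
  rw [Module.finrank_fin_fun]
  rw [inv_pow, inv_inv]
  field_simp

lemma moll_integrable (hρ : Continuous ρ)
    (hρsupp : ∀ x, ρ x ≠ 0 → ∀ i, |x i| < 1) (hε : 0 < ε) :
    Integrable (moll ρ ε) :=
  (moll_continuous hρ hε).integrable_of_hasCompactSupport (moll_hcs hρsupp hε)

lemma Geps_eq_conv (hε : 0 < ε) :
    Geps g ρ ε = convolution (moll ρ ε) g (ContinuousLinearMap.mul ℝ ℝ) volume := by
  funext x
  rw [convolution_def]
  rfl

lemma Geps_continuous (hρ : Continuous ρ) (hρsupp : ∀ x, ρ x ≠ 0 → ∀ i, |x i| < 1)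
    (hloc : LocallyIntegrable g volume) (hε : 0 < ε) : Continuous (Geps g ρ ε) := by
  rw [Geps_eq_conv hε]
  exact (moll_hcs hρsupp hε).continuous_convolution_left _ (moll_continuous hρ hε) hloc

lemma Geps_integrand_integrable (hρ : Continuous ρ) (hρsupp : ∀ x, ρ x ≠ 0 → ∀ i, |x i| < 1)
    (hloc : LocallyIntegrable g volume) (hε : 0 < ε) (x : Fin 4 → ℝ) :
    Integrable (fun y => moll ρ ε y * g (x - y)) := by
  have h := HasCompactSupport.convolutionExists_left (ContinuousLinearMap.mul ℝ ℝ)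
    (moll_hcs hρsupp hε) (moll_continuous hρ hε) hloc x
  exact h





lemma enorm4_continuous : Continuous enorm4 := by
  apply Real.continuous_sqrt.comp
  exact continuous_finset_sum _ fun i _ => (continuous_apply i).pow 2

lemma enorm4_equiv (y : EuclideanSpace ℝ (Fin 4)) :
    enorm4 ((MeasurableEquiv.toLp 2 (Fin 4 → ℝ)).symm y) = ‖y‖ := by
  rw [EuclideanSpace.norm_eq]
  unfold enorm4
  congr 1
  refine Finset.sum_congr rfl fun i _ => ?_
  show (y.ofLp i) ^ 2 = _
  rw [Real.norm_eq_abs, sq_abs]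

lemma volume_ball_E4 :
    (volume (Metric.ball (0 : EuclideanSpace ℝ (Fin 4)) 1)).toReal = π^2 / 2 := by
  rw [EuclideanSpace.volume_ball]
  have hcard : Fintype.card (Fin 4) = 4 := by simp
  rw [hcard]
  have h1 : Real.sqrt π ^ 4 = π ^ 2 := by
    have : Real.sqrt π ^ 4 = (Real.sqrt π ^ 2) ^ 2 := by ring
    rw [this, Real.sq_sqrt Real.pi_pos.le]
  have h2 : Real.Gamma ((4:ℕ) / 2 + 1) = 2 := by
    have : ((4:ℕ):ℝ) / 2 + 1 = (2:ℕ) + 1 := by norm_num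
    rw [this, Real.Gamma_nat_eq_factorial]
    norm_num
  rw [h1, h2]
  rw [ENNReal.ofReal_one, one_pow, one_mul, ENNReal.toReal_ofReal (by positivity)]

lemma euclid_ann_integral (a : ℝ) (ha : 0 < a) :
    ∫ x in {x : Fin 4 → ℝ | a < enorm4 x ∧ enorm4 x ≤ 2*a},
      (1/(4*π^2*(enorm4 x)^2))^2 = 1/(8*π^2) * Real.log 2 := by
  have hS : MeasurableSet {x : Fin 4 → ℝ | a < enorm4 x ∧ enorm4 x ≤ 2*a} := by
    apply MeasurableSet.inter
    · exact measurableSet_lt measurable_const enorm4_continuous.measurable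
    · exact measurableSet_le enorm4_continuous.measurable measurable_const
  set f : ℝ → ℝ := Set.indicator (Set.Ioc a (2*a)) (fun t => (1/(4*π^2*t^2))^2) with hf
  have key : ∫ x : Fin 4 → ℝ,
      Set.indicator {x : Fin 4 → ℝ | a < enorm4 x ∧ enorm4 x ≤ 2*a}
        (fun x => (1/(4*π^2*(enorm4 x)^2))^2) x
      = ∫ y : EuclideanSpace ℝ (Fin 4), f ‖y‖ := by
    rw [← (EuclideanSpace.volume_preserving_symm_measurableEquiv_toLp (Fin 4)).integral_comp
      (MeasurableEquiv.measurableEmbedding _)]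
    congr 1
    funext y
    simp only [Set.indicator_apply, Set.mem_setOf_eq, Set.mem_Ioc, enorm4_equiv, hf]
  rw [← integral_indicator hS, key]
  rw [integral_fun_norm_addHaar volume f]
  have hdim : Module.finrank ℝ (EuclideanSpace ℝ (Fin 4)) = 4 := by
    simp [finrank_euclideanSpace]
  rw [hdim, measureReal_def, volume_ball_E4]
  have hinner : ∫ y in Set.Ioi (0:ℝ), y ^ (4 - 1) • f y = (16*π^4)⁻¹ * Real.log 2 := by
    have h1 : ∀ y : ℝ, y ^ (4-1) • f y
        = Set.indicator (Set.Ioc a (2*a)) (fun t => t^3 * (1/(4*π^2*t^2))^2) y := by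
      intro y
      simp only [hf, Set.indicator_apply, smul_eq_mul]
      split <;> simp
    simp_rw [h1]
    rw [setIntegral_indicator measurableSet_Ioc]
    have h2 : Set.Ioi (0:ℝ) ∩ Set.Ioc a (2*a) = Set.Ioc a (2*a) := by
      apply Set.inter_eq_self_of_subset_right
      intro t ht
      exact lt_trans ha ht.1
    rw [h2]
    have h3 : ∀ t ∈ Set.Ioc a (2*a), t^3 * (1/(4*π^2*t^2))^2 = (16*π^4)⁻¹ * t⁻¹ := by
      intro t ht
      have ht0 : t ≠ 0 := (lt_trans ha ht.1).ne'
      have hπ := Real.pi_ne_zero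
      field_simp
      ring
    rw [setIntegral_congr_fun measurableSet_Ioc h3]
    rw [integral_const_mul]
    rw [← intervalIntegral.integral_of_le (by linarith : a ≤ 2*a)]
    rw [integral_inv_of_pos ha (by linarith)]
    congr 1
    rw [mul_div_assoc, div_self ha.ne', mul_one]
  rw [hinner]
  have hπ := Real.pi_ne_zero
  rw [nsmul_eq_mul, smul_eq_mul]
  field_simp
  ring



lemma log_eight_le_three : Real.log 8 ≤ 3 := by
  rw [show (8:ℝ) = 2^3 by norm_num, Real.log_pow]
  have := Real.log_two_lt_d9
  push_cast
  linarith

lemma inv_sq_diff {a b r δ : ℝ} (hr : 0 < r) (ha : r ≤ a) (hb : r ≤ b)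
    (ha8 : a ≤ 8*r) (hb8 : b ≤ 8*r) (hab : |a - b| ≤ δ) :
    |1/(4*π^2*a^2) - 1/(4*π^2*b^2)| ≤ δ / (2*r^3) := by
  have ha0 : 0 < a := lt_of_lt_of_le hr ha
  have hb0 : 0 < b := lt_of_lt_of_le hr hb
  have hπ := Real.pi_gt_three
  have hδ : 0 ≤ δ := le_trans (abs_nonneg _) hab
  have heq : 1/(4*π^2*a^2) - 1/(4*π^2*b^2) = (b^2 - a^2)/(4*π^2*(a^2*b^2)) := by
    field_simp
  have hdenpos : (0:ℝ) < 4*π^2*(a^2*b^2) :=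
    mul_pos (by positivity) (mul_pos (pow_pos ha0 2) (pow_pos hb0 2))
  rw [heq, abs_div, abs_of_pos hdenpos]
  have hnum : |b^2 - a^2| ≤ 16*r*δ := by
    have h1 : |b^2 - a^2| = |b - a| * (b + a) := by
      rw [show b^2 - a^2 = (b-a)*(b+a) by ring, abs_mul]
      congr 1
      exact abs_of_pos (by linarith)
    rw [h1]
    have h2 : |b - a| ≤ δ := by rwa [abs_sub_comm] at hab
    have h3 : b + a ≤ 16*r := by linarith
    calc |b - a| * (b + a) ≤ δ * (16*r) := by
          apply mul_le_mul h2 h3 (by linarith) hδ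
    _ = 16*r*δ := by ring
  have hden : 4*π^2*r^4 ≤ 4*π^2*(a^2*b^2) := by
    have h4 : r^2 ≤ a^2 := by nlinarith
    have h5 : r^2 ≤ b^2 := by nlinarith
    have h6 : r^4 ≤ a^2*b^2 := by
      calc r^4 = r^2 * r^2 := by ring
      _ ≤ a^2 * b^2 := mul_le_mul h4 h5 (sq_nonneg r) (sq_nonneg a)
    have h7 : (0:ℝ) ≤ 4*π^2 := by positivity
    exact mul_le_mul_of_nonneg_left h6 h7
  calc |b^2 - a^2| / (4*π^2*(a^2*b^2)) ≤ (16*r*δ) / (4*π^2*r^4) := by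
        apply div_le_div₀ (by positivity) hnum (by positivity) hden
  _ ≤ δ / (2*r^3) := by
      rw [div_le_div_iff₀ (by positivity) (by positivity)]
      have hp : (0:ℝ) ≤ 4*π^2 - 32 := by nlinarith
      nlinarith [mul_nonneg (mul_nonneg hδ (pow_pos hr 4).le) hp]

lemma bad_null (x : Fin 4 → ℝ) :
    volume (⋃ k : Fin 4 → ℤ, {x - lpt k}) = 0 := by
  apply measure_iUnion_null
  intro k
  have h0 : volume {y : Fin 4 → ℝ | y 0 = (x - lpt k) 0} = 0 := by
    rw [MeasureTheory.volume_pi]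
    exact MeasureTheory.Measure.pi_hyperplane _ 0 _
  refine measure_mono_null ?_ h0
  intro y hy
  simp only [Set.mem_singleton_iff] at hy
  simp [hy]

lemma key_pointwise (g ρ : (Fin 4 → ℝ) → ℝ)
    (hloc : LocallyIntegrable g volume) (C₀ : ℝ)
    (hexp : ∀ x ∈ Sreg,
      |g x - 1 / (4 * Real.pi ^ 2 * latDist x ^ 2)
          - (1 / (8 * Real.pi ^ 2)) * Real.log (latDist x)| ≤ C₀)
    (hρc : Continuous ρ) (hρpos : ∀ x, 0 ≤ ρ x)
    (hρsupp : ∀ x, ρ x ≠ 0 → ∀ i, |x i| < 1)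
    (hρint : ∫ x : Fin 4 → ℝ, ρ x = 1)
    {ε r : ℝ} (hε : 0 < ε) (hrpos : 0 < r) (hr1 : r ≤ 1) (h2ε : 2*ε ≤ r)
    {x : Fin 4 → ℝ} (hd1 : π * r < latDist x) (hd2 : latDist x ≤ 2*π*r) :
    |Geps g ρ ε x - 1/(4*π^2*(latDist x)^2)| ≤ |C₀| + (Real.log (1/r) + 3) + ε/r^3 := by
  have hπ := Real.pi_gt_three
  set A : ℝ := 1/(4*π^2*(latDist x)^2) with hA
  set E : ℝ := |C₀| + (Real.log (1/r) + 3) + ε/r^3 with hE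
  have hlogr : 0 ≤ Real.log (1/r) := Real.log_nonneg (by rw [le_div_iff₀ hrpos]; linarith)
  have hEpos : 0 ≤ E := by positivity
  have hint1 : Integrable (fun y => moll ρ ε y * g (x - y)) :=
    Geps_integrand_integrable hρc hρsupp hloc hε x
  have hmollint := moll_integrable (ρ := ρ) hρc hρsupp hε
  have hint2 : Integrable (fun y => moll ρ ε y * A) := hmollint.mul_const A
  have hmoll1 : ∫ y : Fin 4 → ℝ, moll ρ ε y = 1 := moll_integral hρc hρsupp hρint hε
  have step1 : Geps g ρ ε x - A = ∫ y, (moll ρ ε y * g (x-y) - moll ρ ε y * A) := by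
    rw [integral_sub hint1 hint2]
    congr 1
    rw [integral_mul_const, hmoll1, one_mul]
  rw [step1]
  have step2 : |∫ y, (moll ρ ε y * g (x-y) - moll ρ ε y * A)|
      ≤ ∫ y, |moll ρ ε y * g (x-y) - moll ρ ε y * A| := by
    have := norm_integral_le_integral_norm (μ := volume)
      (f := fun y => moll ρ ε y * g (x-y) - moll ρ ε y * A)
    simpa [Real.norm_eq_abs] using this
  refine step2.trans ?_
  have step3 : ∫ y, |moll ρ ε y * g (x-y) - moll ρ ε y * A| ≤ ∫ y, moll ρ ε y * E := by
    apply integral_mono_of_nonneg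
    · exact Filter.Eventually.of_forall fun y => abs_nonneg _
    · exact hmollint.mul_const E
    · have hnull := bad_null x
      rw [← MeasureTheory.compl_mem_ae_iff] at hnull
      filter_upwards [hnull] with y hy
      show |moll ρ ε y * g (x-y) - moll ρ ε y * A| ≤ moll ρ ε y * E
      have habs : |moll ρ ε y * g (x-y) - moll ρ ε y * A|
          = moll ρ ε y * |g (x-y) - A| := by
        rw [← mul_sub, abs_mul, abs_of_nonneg (moll_nonneg hρpos y)]
      rw [habs]
      rcases eq_or_ne (moll ρ ε y) 0 with h0 | h0
      · rw [h0, zero_mul, zero_mul]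
      · refine mul_le_mul_of_nonneg_left ?_ (moll_nonneg hρpos y)
        -- y is in the support of the mollifier
        have hρne : ρ (fun i => y i / ε) ≠ 0 := by
          intro hc
          apply h0
          unfold moll
          rw [hc, mul_zero]
        have hyε : ∀ i, |y i| ≤ ε := by
          intro i
          have := hρsupp _ hρne i
          rw [abs_div, abs_of_pos hε, div_lt_one hε] at this
          exact this.le
        have hy2ε : enorm4 y ≤ 2*ε := enorm4_le_of_bounded hyε
        -- x - y is regular
        have hreg : (x - y) ∈ Sreg := by
          intro k hk
          apply hy
          simp only [Set.mem_compl_iff, Set.mem_iUnion, Set.mem_singleton_iff, not_exists] at *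
          exact ⟨k, by rw [← hk]; funext i; simp⟩
        set d1 := latDist (x - y) with hd1'
        set d2 := latDist x with hd2'
        have hlip : |d1 - d2| ≤ 2*ε := by
          have h := latDist_abs_sub (x - y) x
          have : enorm4 (x - y - x) = enorm4 y := by
            rw [show x - y - x = -y by ring, enorm4_neg]
          rw [this] at h
          exact h.trans hy2ε
        have hlip' : |d2 - d1| ≤ 2*ε := by rwa [abs_sub_comm]
        have habs1 := abs_le.mp hlip
        have hπ2 : π < 3.15 := by
          have := Real.pi_lt_d2
          linarith
        have h3r : 3*r < π*r := by
          exact mul_lt_mul_of_pos_right hπ hrpos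
        have h315 : π*r < 3.15*r := mul_lt_mul_of_pos_right hπ2 hrpos
        have hd1lo : r ≤ d1 := by linarith
        have hd1hi : d1 ≤ 8*r := by linarith
        have hd2lo : r ≤ d2 := by linarith
        have hd2hi : d2 ≤ 8*r := by linarith
        have hd1pos : 0 < d1 := lt_of_lt_of_le hrpos hd1lo
        -- decompose
        have hdecomp : g (x-y) - A
            = (g (x-y) - 1/(4*π^2*d1^2) - (1/(8*π^2)) * Real.log d1)
              + (1/(8*π^2)) * Real.log d1
              + (1/(4*π^2*d1^2) - 1/(4*π^2*d2^2)) := by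
          rw [hA]; ring
        rw [hdecomp]
        have hterm1 : |g (x-y) - 1/(4*π^2*d1^2) - (1/(8*π^2)) * Real.log d1| ≤ |C₀| :=
          le_trans (hexp _ hreg) (le_abs_self C₀)
        have hlog : |Real.log d1| ≤ Real.log (1/r) + 3 := by
          rw [abs_le]
          constructor
          · have h1 : Real.log r ≤ Real.log d1 := Real.log_le_log hrpos hd1lo
            rw [one_div, Real.log_inv]
            linarith
          · have h1 : Real.log d1 ≤ Real.log (8*r) :=
              Real.log_le_log hd1pos hd1hi
            rw [Real.log_mul (by norm_num) hrpos.ne'] at h1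
            have h2 : Real.log r ≤ 0 := Real.log_nonpos hrpos.le hr1
            have h3 := log_eight_le_three
            linarith
        have hterm2 : |(1/(8*π^2)) * Real.log d1| ≤ Real.log (1/r) + 3 := by
          rw [abs_mul]
          have hc : |1/(8*π^2)| ≤ 1 := by
            rw [abs_of_pos (by positivity)]
            rw [div_le_one (by positivity)]
            nlinarith
          calc |1/(8*π^2)| * |Real.log d1| ≤ 1 * (Real.log (1/r) + 3) :=
                mul_le_mul hc hlog (abs_nonneg _) zero_le_one
          _ = Real.log (1/r) + 3 := one_mul _
        have hterm3 : |1/(4*π^2*d1^2) - 1/(4*π^2*d2^2)| ≤ ε/r^3 := by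
          have := inv_sq_diff hrpos hd1lo hd2lo hd1hi hd2hi hlip
          calc |1/(4*π^2*d1^2) - 1/(4*π^2*d2^2)| ≤ (2*ε)/(2*r^3) := this
          _ = ε/r^3 := by
              rw [div_eq_div_iff (by positivity) (by positivity)]
              ring
        calc |_ + _ + _| ≤ |g (x-y) - 1/(4*π^2*d1^2) - (1/(8*π^2)) * Real.log d1|
              + |(1/(8*π^2)) * Real.log d1| + |1/(4*π^2*d1^2) - 1/(4*π^2*d2^2)| := by
              apply (abs_add_le _ _).trans
              apply add_le_add_left (abs_add_le _ _)
        _ ≤ E := by rw [hE]; linarith [hterm1, hterm2, hterm3]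
  refine step3.trans ?_
  rw [integral_mul_const, hmoll1, one_mul]


lemma FD_measurable : MeasurableSet FD := by
  have h : FD = ⋂ i, (fun x : Fin 4 → ℝ => x i) ⁻¹' Set.Ioc (-π) π := by
    ext x
    simp [FD, Set.mem_iInter]
  rw [h]
  exact MeasurableSet.iInter fun i => (measurable_pi_apply i) measurableSet_Ioc

lemma region_measurable (a b : ℝ) :
    MeasurableSet (FD ∩ {x : Fin 4 → ℝ | a < latDist x ∧ latDist x ≤ b}) :=
  FD_measurable.inter ((measurableSet_lt measurable_const latDist_continuous.measurable).inter
    (measurableSet_le latDist_continuous.measurable measurable_const))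

lemma hyper_null : volume (⋃ i : Fin 4, {x : Fin 4 → ℝ | x i = -π}) = 0 := by
  apply measure_iUnion_null
  intro i
  rw [MeasureTheory.volume_pi]
  exact MeasureTheory.Measure.pi_hyperplane _ i _

lemma mem_FD_of_small {x : Fin 4 → ℝ} (hb : enorm4 x ≤ π) (hx : ∀ i, x i ≠ -π) : x ∈ FD := by
  intro i
  have h1 := abs_apply_le_enorm4 x i
  have h2 := hx i
  have h3 : |x i| ≤ π := h1.trans hb
  rw [abs_le] at h3
  exact ⟨lt_of_le_of_ne h3.1 (Ne.symm h2), h3.2⟩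

lemma region_ae {a b : ℝ} (hb : b ≤ π) :
    ((FD ∩ {x : Fin 4 → ℝ | a < latDist x ∧ latDist x ≤ b} : Set (Fin 4 → ℝ)))
      =ᵐ[volume] ({x : Fin 4 → ℝ | a < enorm4 x ∧ enorm4 x ≤ b} : Set (Fin 4 → ℝ)) := by
  rw [MeasureTheory.ae_eq_set]
  constructor
  · have hsub : (FD ∩ {x : Fin 4 → ℝ | a < latDist x ∧ latDist x ≤ b})
        \ {x : Fin 4 → ℝ | a < enorm4 x ∧ enorm4 x ≤ b} = ∅ := by
      rw [Set.diff_eq_empty]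
      rintro x ⟨hfd, h1, h2⟩
      have he := latDist_eq_enorm4_of_FD hfd
      exact ⟨he ▸ h1, he ▸ h2⟩
    rw [hsub, measure_empty]
  · refine measure_mono_null ?_ hyper_null
    intro x hx
    by_contra hc
    simp only [Set.mem_iUnion, Set.mem_setOf_eq, not_exists] at hc
    obtain ⟨⟨h1, h2⟩, h3⟩ := hx
    apply h3
    have hfd : x ∈ FD := mem_FD_of_small (h2.trans hb) hc
    have he := latDist_eq_enorm4_of_FD hfd
    exact ⟨hfd, he ▸ h1, he ▸ h2⟩

lemma annulus_latDist_integral {a : ℝ} (ha : 0 < a) (h2a : 2*a ≤ π) :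
    ∫ x in {x : Fin 4 → ℝ | a < enorm4 x ∧ enorm4 x ≤ 2*a},
      (1/(4*π^2*(latDist x)^2))^2 = 1/(8*π^2) * Real.log 2 := by
  rw [← euclid_ann_integral a ha]
  have hS : MeasurableSet {x : Fin 4 → ℝ | a < enorm4 x ∧ enorm4 x ≤ 2*a} :=
    (measurableSet_lt measurable_const enorm4_continuous.measurable).inter
      (measurableSet_le enorm4_continuous.measurable measurable_const)
  apply setIntegral_congr_ae hS
  have hnull := hyper_null
  rw [← MeasureTheory.compl_mem_ae_iff] at hnull
  filter_upwards [hnull] with x hx hxS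
  have hc : ∀ i, x i ≠ -π := by
    intro i hci
    exact hx (Set.mem_iUnion.mpr ⟨i, hci⟩)
  have hfd : x ∈ FD := mem_FD_of_small (hxS.2.trans h2a) hc
  rw [latDist_eq_enorm4_of_FD hfd]

lemma cube_eq_Icc (R : ℝ) :
    {x : Fin 4 → ℝ | ∀ i, |x i| ≤ R} = Set.Icc (fun _ => -R) (fun _ => R) := by
  ext x
  simp only [Set.mem_setOf_eq, Set.mem_Icc, Pi.le_def]
  constructor
  · intro h
    exact ⟨fun i => (abs_le.mp (h i)).1, fun i => (abs_le.mp (h i)).2⟩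
  · intro ⟨h1, h2⟩ i
    exact abs_le.mpr ⟨h1 i, h2 i⟩

lemma vol_cube_bound {s : Set (Fin 4 → ℝ)} {R : ℝ} (hR : 0 ≤ R)
    (hs : s ⊆ {x : Fin 4 → ℝ | ∀ i, |x i| ≤ R}) :
    volume s ≤ ENNReal.ofReal ((2*R)^4) := by
  calc volume s ≤ volume {x : Fin 4 → ℝ | ∀ i, |x i| ≤ R} := measure_mono hs
  _ = ENNReal.ofReal ((2*R)^4) := by
      rw [cube_eq_Icc, Real.volume_Icc_pi]
      simp only [Finset.prod_const, Finset.card_univ, Fintype.card_fin]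
      rw [show R - -R = 2*R by ring]
      rw [← ENNReal.ofReal_pow (by linarith)]

lemma vol_cube_bound' {s : Set (Fin 4 → ℝ)} {R : ℝ} (hR : 0 ≤ R)
    (hs : s ⊆ {x : Fin 4 → ℝ | ∀ i, |x i| ≤ R}) :
    (volume s).toReal ≤ (2*R)^4 ∧ volume s < ⊤ := by
  refine ⟨ENNReal.toReal_le_of_le_ofReal (by positivity) (vol_cube_bound hR hs), ?_⟩
  exact lt_of_le_of_lt (vol_cube_bound hR hs) ENNReal.ofReal_lt_top

/-- Lemma `lem_fixingestimate`: there is `C > 0` such that for every `ε ∈ (0,1)` and every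
`n ∈ {0, …, N_ε - 1}` (with `N_ε = ⌊log₂(1/ε)⌋`),
`|∫_{(2π)2^{-(n+1)} < |x| ≤ (2π)2^{-n}} G_ε(x)² dx - (1/(8π²)) log 2|
  ≤ C (2^{-n} + 2^{-(N_ε - n - 1)})`. -/
theorem stmt17 (g ρ : (Fin 4 → ℝ) → ℝ)
    (hper : Per g) (hloc : LocallyIntegrable g volume) (C₀ : ℝ)
    (hexp : ∀ x ∈ Sreg,
      |g x - 1 / (4 * Real.pi ^ 2 * latDist x ^ 2)
          - (1 / (8 * Real.pi ^ 2)) * Real.log (latDist x)| ≤ C₀)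
    (hρsmooth : ContDiff ℝ (⊤ : ℕ∞) ρ) (hρpos : ∀ x, 0 ≤ ρ x)
    (hρrad : ∀ x y, enorm4 x = enorm4 y → ρ x = ρ y)
    (hρsupp : ∀ x, ρ x ≠ 0 → ∀ i, |x i| < 1)
    (hρint : ∫ x : Fin 4 → ℝ, ρ x = 1) :
    ∃ C : ℝ, 0 < C ∧ ∀ ε ∈ Set.Ioo (0:ℝ) 1, ∀ n : ℕ,
      (n : ℤ) ≤ ⌊Real.logb 2 (1 / ε)⌋ - 1 →
      |(∫ x in FD ∩ {x : Fin 4 → ℝ |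
            2 * Real.pi * (2:ℝ) ^ (-(n:ℝ) - 1) < latDist x ∧
              latDist x ≤ 2 * Real.pi * (2:ℝ) ^ (-(n:ℝ))},
          (Geps g ρ ε x) ^ 2) - (1 / (8 * Real.pi ^ 2)) * Real.log 2|
        ≤ C * ((2:ℝ) ^ (-(n:ℝ)) +
            (2:ℝ) ^ (-((⌊Real.logb 2 (1 / ε)⌋ : ℝ) - (n:ℝ) - 1))) := by
  have hρc : Continuous ρ := hρsmooth.continuous
  have hπ3 : (3:ℝ) < π := Real.pi_gt_three
  have hπ0 : (0:ℝ) < π := by linarith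
  set K : ℝ := |C₀| + 3 with hK
  have hK0 : (0:ℝ) ≤ K := by positivity
  set C1 : ℝ := 256*π^4 * (2*(K+1) + 2*(K+1)^2 + 1) with hC1
  set C2 : ℝ := 256*π^4 * (K+2)^2 + 1 with hC2
  have hC1pos : 0 < C1 := by positivity
  have hC2pos : 0 < C2 := by positivity
  refine ⟨C1 + C2, by positivity, ?_⟩
  rintro ε ⟨hε0, hε1⟩ n hn
  set N : ℤ := ⌊Real.logb 2 (1/ε)⌋ with hNdef
  set r : ℝ := (2:ℝ)^(-(n:ℝ)) with hr
  set t : ℝ := (2:ℝ)^(-((N:ℝ) - (n:ℝ) - 1)) with ht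
  have hrpos : 0 < r := Real.rpow_pos_of_pos two_pos _
  have htpos : 0 < t := Real.rpow_pos_of_pos two_pos _
  have hr1 : r ≤ 1 :=
    Real.rpow_le_one_of_one_le_of_nonpos one_le_two (neg_nonpos.mpr (Nat.cast_nonneg n))
  have hnN : (n:ℝ) ≤ (N:ℝ) - 1 := by
    have : ((n:ℤ):ℝ) ≤ ((N - 1 : ℤ):ℝ) := by exact_mod_cast hn
    push_cast at this
    linarith
  have ht1 : t ≤ 1 :=
    Real.rpow_le_one_of_one_le_of_nonpos one_le_two (by linarith)
  have h2Npos : (0:ℝ) < (2:ℝ)^((N:ℝ)) := Real.rpow_pos_of_pos two_pos _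
  have hεN : ε ≤ (2:ℝ)^(-(N:ℝ)) := by
    have h1 : ((N:ℤ):ℝ) ≤ Real.logb 2 (1/ε) := Int.floor_le _
    have h2 : (2:ℝ)^((N:ℝ)) ≤ (2:ℝ)^(Real.logb 2 (1/ε)) :=
      Real.rpow_le_rpow_of_exponent_le one_le_two h1
    rw [Real.rpow_logb two_pos (by norm_num) (by positivity)] at h2
    have h3 : ε * (2:ℝ)^((N:ℝ)) ≤ 1 := by
      have h4 := mul_le_mul_of_nonneg_left h2 hε0.le
      rw [mul_one_div, div_self hε0.ne'] at h4
      linarith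
    rw [Real.rpow_neg two_pos.le, inv_eq_one_div]
    exact (le_div_iff₀ h2Npos).mpr h3
  have hεtr : ε ≤ t*r/2 := by
    have heq : t*r/2 = (2:ℝ)^(-(N:ℝ)) := by
      rw [ht, hr, ← Real.rpow_add two_pos]
      rw [show -((N:ℝ) - (n:ℝ) - 1) + -(n:ℝ) = -(N:ℝ) + 1 by ring]
      rw [Real.rpow_add two_pos, Real.rpow_one]
      ring
    rw [heq]
    exact hεN
  have h2εr : 2*ε ≤ r := by
    have h1 : t * r ≤ r := mul_le_of_le_one_left hrpos.le ht1
    linarith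
  -- rewrite the set in the goal
  have hir : (2:ℝ)^(-(n:ℝ) - 1) = r/2 := by
    rw [show -(n:ℝ) - 1 = -(n:ℝ) + (-1) by ring, Real.rpow_add two_pos, hr,
      Real.rpow_neg_one]
    ring
  rw [hir]
  rw [show 2 * Real.pi * (r/2) = π*r from by ring]
  rw [show 2 * Real.pi * r = 2*(π*r) from by ring]
  set D := FD ∩ {x : Fin 4 → ℝ | π*r < latDist x ∧ latDist x ≤ 2*(π*r)} with hD
  have hDsub : D ⊆ {x : Fin 4 → ℝ | ∀ i, |x i| ≤ 2*(π*r)} := by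
    rintro x ⟨hfd, h1, h2⟩ i
    have he := latDist_eq_enorm4_of_FD hfd
    have h3 := abs_apply_le_enorm4 x i
    rw [he] at h2
    linarith
  obtain ⟨hvolR, hvolT⟩ := vol_cube_bound' (by positivity) hDsub
  have hvolR' : (volume D).toReal ≤ 256*π^4*r^4 := by
    calc (volume D).toReal ≤ (2*(2*(π*r)))^4 := hvolR
    _ = 256*π^4*r^4 := by ring
  set Eb : ℝ := K + (n:ℝ) + t/(2*r^2) with hEb
  have hEb0 : 0 ≤ Eb := by
    rw [hEb]
    positivity

  have hlog1r : Real.log (1/r) ≤ (n:ℝ) := by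
    rw [hr, one_div, ← Real.rpow_neg two_pos.le, neg_neg, Real.log_rpow two_pos]
    have h2 := Real.log_two_lt_d9
    nlinarith [Nat.cast_nonneg (α := ℝ) n]
  have hεr3 : ε/r^3 ≤ t/(2*r^2) := by
    rw [div_le_div_iff₀ (by positivity) (by positivity)]
    calc ε * (2*r^2) ≤ (t*r/2) * (2*r^2) :=
          mul_le_mul_of_nonneg_right hεtr (by positivity)
    _ = t * r^3 := by ring
  have hkey : ∀ x ∈ D, |Geps g ρ ε x - 1/(4*π^2*(latDist x)^2)| ≤ Eb := by
    rintro x ⟨hfd, h1, h2⟩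
    have h := key_pointwise g ρ hloc C₀ hexp hρc hρpos hρsupp hρint hε0 hrpos hr1 h2εr
      h1 (by linarith)
    refine h.trans ?_
    rw [hEb, hK]
    linarith [hlog1r, hεr3]
  have hAle : ∀ x ∈ D, 1/(4*π^2*(latDist x)^2) ≤ 1/r^2 := by
    rintro x ⟨hfd, h1, h2⟩
    have hd0 : 0 < latDist x := lt_trans (by positivity) h1
    apply one_div_le_one_div_of_le (by positivity)
    have hdr : r ≤ latDist x := by
      have := mul_lt_mul_of_pos_right hπ3 hrpos
      linarith
    have h4 : r^2 ≤ (latDist x)^2 := by nlinarith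
    nlinarith [sq_nonneg (latDist x)]
  have hGb : ∀ x ∈ D, |Geps g ρ ε x| ≤ 1/r^2 + Eb := by
    intro x hx
    have h1 := hkey x hx
    have h2 := hAle x hx
    have h3 : 0 ≤ 1/(4*π^2*(latDist x)^2) := by positivity
    calc |Geps g ρ ε x|
        = |(Geps g ρ ε x - 1/(4*π^2*(latDist x)^2)) + 1/(4*π^2*(latDist x)^2)| := by
          congr 1; ring
    _ ≤ |Geps g ρ ε x - 1/(4*π^2*(latDist x)^2)| + |1/(4*π^2*(latDist x)^2)| := abs_add_le _ _
    _ ≤ Eb + 1/r^2 := add_le_add h1 (by rw [abs_of_nonneg h3]; exact h2)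
    _ = 1/r^2 + Eb := by ring
  have hptw : ∀ x ∈ D,
      ‖(Geps g ρ ε x)^2 - (1/(4*π^2*(latDist x)^2))^2‖ ≤ Eb*(2/r^2 + Eb) := by
    intro x hx
    rw [Real.norm_eq_abs]
    have h1 := hkey x hx
    have h2 := hAle x hx
    have h3 : 0 ≤ 1/(4*π^2*(latDist x)^2) := by positivity
    have hG := hGb x hx
    rw [show (Geps g ρ ε x)^2 - (1/(4*π^2*(latDist x)^2))^2
        = (Geps g ρ ε x - 1/(4*π^2*(latDist x)^2))
          * (Geps g ρ ε x + 1/(4*π^2*(latDist x)^2)) from by ring, abs_mul]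
    have h4 : |Geps g ρ ε x + 1/(4*π^2*(latDist x)^2)| ≤ 2/r^2 + Eb := by
      calc |Geps g ρ ε x + 1/(4*π^2*(latDist x)^2)|
          ≤ |Geps g ρ ε x| + |1/(4*π^2*(latDist x)^2)| := abs_add_le _ _
      _ ≤ (1/r^2 + Eb) + 1/r^2 := add_le_add hG (by rw [abs_of_nonneg h3]; exact h2)
      _ = 2/r^2 + Eb := by ring
    exact mul_le_mul h1 h4 (abs_nonneg _) hEb0
  have hGcont : Continuous (Geps g ρ ε) := Geps_continuous hρc hρsupp hloc hε0
  have hG2meas : AEStronglyMeasurable (fun x => (Geps g ρ ε x)^2) (volume.restrict D) :=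
    ((hGcont.pow 2).aestronglyMeasurable).restrict
  have hIccSub : D ⊆ Set.Icc (fun _ : Fin 4 => -(2*(π*r))) (fun _ => 2*(π*r)) := by
    intro x hx
    rw [← cube_eq_Icc]
    exact hDsub hx
  have hIG : IntegrableOn (fun x => (Geps g ρ ε x)^2) D volume :=
    (((hGcont.pow 2).continuousOn).integrableOn_compact isCompact_Icc).mono_set hIccSub
  have hAmeasfun : Measurable fun x : Fin 4 → ℝ => (1/(4*π^2*(latDist x)^2))^2 := by
    apply Measurable.pow_const
    apply Measurable.div measurable_const
    exact measurable_const.mul ((latDist_continuous.measurable).pow_const 2)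
  have hIA2 : IntegrableOn (fun x => (1/(4*π^2*(latDist x)^2))^2) D volume := by
    have hK'c : IsCompact (Set.Icc (fun _ : Fin 4 => -(2*(π*r))) (fun _ => 2*(π*r))
        ∩ {x : Fin 4 → ℝ | π*r ≤ latDist x}) :=
      isCompact_Icc.inter_right (isClosed_le continuous_const latDist_continuous)
    have hcont : ContinuousOn (fun x : Fin 4 → ℝ => (1/(4*π^2*(latDist x)^2))^2)
        (Set.Icc (fun _ : Fin 4 => -(2*(π*r))) (fun _ => 2*(π*r))
          ∩ {x : Fin 4 → ℝ | π*r ≤ latDist x}) := by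
      apply ContinuousOn.pow
      apply ContinuousOn.div continuousOn_const
      · exact continuousOn_const.mul ((latDist_continuous.continuousOn).pow 2)
      · rintro x ⟨_, hx2⟩
        have hd0 : 0 < latDist x := lt_of_lt_of_le (by positivity) hx2
        positivity
    refine (hcont.integrableOn_compact hK'c).mono_set ?_
    intro x hx
    exact ⟨hIccSub hx, le_of_lt hx.2.1⟩
  clear_value K C1 C2 N r t D Eb
  rcases Nat.eq_zero_or_pos n with hn0 | hn1
  · -- n = 0 : crude bound
    subst hn0
    have hr_one : r = 1 := by rw [hr]; norm_num
    have hc1 : |1/(8*π^2) * Real.log 2| ≤ 1 := by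
      rw [abs_of_nonneg (by positivity)]
      have hl2u : Real.log 2 < 0.6931471808 := Real.log_two_lt_d9
      have hl2l : (0:ℝ) ≤ Real.log 2 := Real.log_nonneg one_le_two
      have hfrac : 1/(8*π^2) ≤ 1 := by
        rw [div_le_one (by positivity)]
        nlinarith
      nlinarith
    have hEb_le : Eb ≤ K + 1 := by
      rw [hEb, hr_one]
      push_cast
      have : t/(2*1^2) ≤ 1 := by
        rw [one_pow, mul_one]
        linarith
      linarith
    have hInt : |∫ x in D, (Geps g ρ ε x)^2| ≤ 256*π^4*(K+2)^2 := by
      have hb : ∀ x ∈ D, ‖(Geps g ρ ε x)^2‖ ≤ (K+2)^2 := by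
        intro x hx
        have hG := hGb x hx
        rw [hr_one] at hG
        norm_num at hG
        have hGle : |Geps g ρ ε x| ≤ K + 2 := by linarith
        rw [Real.norm_eq_abs, abs_pow]
        exact pow_le_pow_left₀ (abs_nonneg _) hGle 2
      have hnorm := norm_setIntegral_le_of_norm_le_const hvolT hb
      rw [Real.norm_eq_abs] at hnorm
      refine hnorm.trans ?_
      rw [hr_one] at hvolR'
      norm_num at hvolR'
      calc (K+2)^2 * (volume D).toReal ≤ (K+2)^2 * (256*π^4) :=
            mul_le_mul_of_nonneg_left hvolR' (sq_nonneg _)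
      _ = 256*π^4*(K+2)^2 := by ring
    have habs : |(∫ x in D, (Geps g ρ ε x)^2) - 1/(8*π^2) * Real.log 2|
        ≤ |∫ x in D, (Geps g ρ ε x)^2| + |1/(8*π^2) * Real.log 2| := by
      rw [sub_eq_add_neg]
      refine (abs_add_le _ _).trans ?_
      rw [abs_neg]
    have hC2b : |(∫ x in D, (Geps g ρ ε x)^2) - 1/(8*π^2) * Real.log 2| ≤ C2 := by
      rw [hC2]
      calc |(∫ x in D, (Geps g ρ ε x)^2) - 1/(8*π^2) * Real.log 2|
          ≤ |∫ x in D, (Geps g ρ ε x)^2| + |1/(8*π^2) * Real.log 2| := habs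
      _ ≤ 256*π^4*(K+2)^2 + 1 := add_le_add hInt hc1
    refine hC2b.trans ?_
    have hrt1 : (1:ℝ) ≤ r + t := by rw [hr_one]; linarith
    have h9 : (C1+C2)*1 ≤ (C1+C2)*(r+t) :=
      mul_le_mul_of_nonneg_left hrt1 (by linarith)
    linarith
  · -- n ≥ 1 : main estimate
    have hrhalf : r ≤ 1/2 := by
      rw [hr]
      have h1 : -(n:ℝ) ≤ -1 := by
        have : (1:ℝ) ≤ (n:ℝ) := by exact_mod_cast hn1
        linarith
      have h2 := Real.rpow_le_rpow_of_exponent_le (x := (2:ℝ)) one_le_two h1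
      rw [Real.rpow_neg_one] at h2
      norm_num at h2 ⊢
      linarith
    have h2aπ : 2*(π*r) ≤ π := by nlinarith
    have hIAeq : ∫ x in D, (1/(4*π^2*(latDist x)^2))^2 = 1/(8*π^2) * Real.log 2 := by
      rw [hD, setIntegral_congr_set (region_ae h2aπ)]
      exact annulus_latDist_integral (by positivity) h2aπ
    rw [show (∫ x in D, (Geps g ρ ε x)^2) - 1/(8*π^2) * Real.log 2
        = ∫ x in D, ((Geps g ρ ε x)^2 - (1/(4*π^2*(latDist x)^2))^2) from by
      rw [integral_sub hIG hIA2, hIAeq]]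
    have hnorm := norm_setIntegral_le_of_norm_le_const hvolT hptw
    rw [Real.norm_eq_abs] at hnorm
    refine hnorm.trans ?_
    have hB0 : 0 ≤ Eb*(2/r^2+Eb) :=
      mul_nonneg hEb0 (add_nonneg (by positivity) hEb0)
    have hstep : Eb*(2/r^2+Eb) * (volume D).toReal ≤ Eb*(2/r^2+Eb) * (256*π^4*r^4) :=
      mul_le_mul_of_nonneg_left hvolR' hB0
    refine hstep.trans ?_
    have hnr : (n:ℝ)*r ≤ 1 := by
      have h1 : ((2:ℝ)^(n:ℕ))⁻¹ = r := by
        rw [hr, ← Real.rpow_natCast 2 n, ← Real.rpow_neg two_pos.le]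
      have h2 : (n:ℝ) ≤ (2:ℝ)^(n:ℕ) := by exact_mod_cast (Nat.lt_two_pow_self (n := n)).le
      have h3 : (0:ℝ) < (2:ℝ)^(n:ℕ) := by positivity
      rw [← h1]
      calc (n:ℝ) * ((2:ℝ)^(n:ℕ))⁻¹ ≤ (2:ℝ)^(n:ℕ) * ((2:ℝ)^(n:ℕ))⁻¹ :=
            mul_le_mul_of_nonneg_right h2 (by positivity)
      _ = 1 := mul_inv_cancel₀ h3.ne'
    have hq : Eb * r^2 ≤ (K+1)*r + t/2 := by
      rw [hEb]
      have h1 : t/(2*r^2)*r^2 = t/2 := by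
        field_simp
      have h2 : K*r^2 ≤ K*r := by
        have h2a : (K*r)*r ≤ (K*r)*1 :=
          mul_le_mul_of_nonneg_left hr1 (mul_nonneg hK0 hrpos.le)
        calc K*r^2 = (K*r)*r := by ring
        _ ≤ (K*r)*1 := h2a
        _ = K*r := by ring
      have h3 : (n:ℝ)*r^2 ≤ r := by
        have h3a : ((n:ℝ)*r)*r ≤ 1*r := mul_le_mul_of_nonneg_right hnr hrpos.le
        calc (n:ℝ)*r^2 = ((n:ℝ)*r)*r := by ring
        _ ≤ 1*r := h3a
        _ = r := by ring
      calc (K + (n:ℝ) + t/(2*r^2))*r^2 = K*r^2 + (n:ℝ)*r^2 + t/(2*r^2)*r^2 := by ring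
      _ ≤ K*r + r + t/2 := by rw [h1]; linarith
      _ = (K+1)*r + t/2 := by ring
    have hq0 : 0 ≤ Eb * r^2 := mul_nonneg hEb0 (sq_nonneg r)
    have hq2 : (Eb*r^2)^2 ≤ 2*(K+1)^2*r + t/2 := by
      have h1 : (Eb*r^2)^2 ≤ ((K+1)*r + t/2)^2 := pow_le_pow_left₀ hq0 hq 2
      have h2 : ((K+1)*r + t/2)^2 ≤ 2*((K+1)*r)^2 + 2*(t/2)^2 := by
        nlinarith [sq_nonneg ((K+1)*r - t/2)]
      have h3 : ((K+1)*r)^2 ≤ (K+1)^2*r := by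
        have h3a : ((K+1)^2*r)*r ≤ ((K+1)^2*r)*1 :=
          mul_le_mul_of_nonneg_left hr1 (mul_nonneg (by positivity) hrpos.le)
        calc ((K+1)*r)^2 = ((K+1)^2*r)*r := by ring
        _ ≤ ((K+1)^2*r)*1 := h3a
        _ = (K+1)^2*r := by ring
      have h4 : (t/2)^2 ≤ t/4 := by
        have h4a : t*t ≤ t*1 := mul_le_mul_of_nonneg_left ht1 htpos.le
        calc (t/2)^2 = t*t/4 := by ring
        _ ≤ t*1/4 := by linarith
        _ = t/4 := by ring
      linarith
    have hrne : r ≠ 0 := hrpos.ne'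
    have hexpand : Eb*(2/r^2+Eb)*(256*π^4*r^4) = 256*π^4*(2*(Eb*r^2) + (Eb*r^2)^2) := by
      field_simp
    rw [hexpand]
    have hmain : 2*(Eb*r^2) + (Eb*r^2)^2 ≤ (2*(K+1) + 2*(K+1)^2 + 1)*(r+t) := by
      have h5 : (3/2:ℝ)*t ≤ (2*(K+1) + 2*(K+1)^2 + 1)*t := by
        apply mul_le_mul_of_nonneg_right _ htpos.le
        nlinarith [sq_nonneg (K+1)]
      have h6 : (2*(K+1) + 2*(K+1)^2)*r ≤ (2*(K+1)+2*(K+1)^2+1)*r := by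
        apply mul_le_mul_of_nonneg_right _ hrpos.le
        linarith
      calc 2*(Eb*r^2) + (Eb*r^2)^2 ≤ 2*((K+1)*r + t/2) + (2*(K+1)^2*r + t/2) := by
            linarith
      _ = (2*(K+1) + 2*(K+1)^2)*r + (3/2)*t := by ring
      _ ≤ (2*(K+1)+2*(K+1)^2+1)*r + (2*(K+1)+2*(K+1)^2+1)*t := by linarith
      _ = (2*(K+1) + 2*(K+1)^2 + 1)*(r+t) := by ring
    calc 256*π^4*(2*(Eb*r^2) + (Eb*r^2)^2)
        ≤ 256*π^4*((2*(K+1)+2*(K+1)^2+1)*(r+t)) :=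
          mul_le_mul_of_nonneg_left hmain (by positivity)
    _ = C1*(r+t) := by rw [hC1]; ring
    _ ≤ (C1+C2)*(r+t) :=
        mul_le_mul_of_nonneg_right (by linarith) (by linarith)


end
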